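/- Let f : R^n → R be L-smooth and ℓ-strongly convex with minimizer x⋆, 0 < γ ≤ 1/L, and suppose the update x⁺ = x − γh satisfies ‖∇f(x) − h‖ ≤ max(r̄‖∇f(x)‖, δ) for constants r̄ ≥ 0 and δ ≥ 0. Then f(x⁺) − f(x⋆) ≤ (1 + γL r̄² − γℓ)(f(x) − f(x⋆)) + γδ²/2. -/

import Mathlib

/-!
For `γ L ≤ 1`, smoothness gives the inexact descent inequality
`f (x - γ h) ≤ f x - (γ/2) ‖∇f x‖² + (γ/2) ‖∇f x - h‖²`, and the error term is at most
`r̄² ‖∇f x‖² + δ²`. The part `r̄² ‖∇f x‖²` is charged to the optimality gap through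
`‖∇f x‖² ≤ 2 L (f x - f x⋆)` (one exact gradient step from `x` cannot go below `f x⋆`), while
`-‖∇f x‖²` is bounded by the Polyak–Łojasiewicz inequality `‖∇f x‖² ≥ 2 ℓ (f x - f x⋆)`, obtained
by minimising the strong-convexity lower bound at `x` over the whole space.
-/

open RealInnerProductSpace Set

theorem sq_le_sq_add_sq_of_le_max {α : Type*} [Ring α] [LinearOrder α] [IsStrictOrderedRing α]
    {a b c : α} (ha : 0 ≤ a) (h : a ≤ max b c) : a ^ 2 ≤ b ^ 2 + c ^ 2 := by
  rcases le_max_iff.1 h with h | h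
  · exact le_add_of_le_of_nonneg (pow_le_pow_left₀ ha h 2) (sq_nonneg c)
  · exact le_add_of_nonneg_of_le (sq_nonneg b) (pow_le_pow_left₀ ha h 2)

theorem ConvexOn.add_le_of_hasFDerivAt {E : Type*} [NormedAddCommGroup E] [NormedSpace ℝ E]
    {f : E → ℝ} {f' : E →L[ℝ] ℝ} {x : E} (hf : ConvexOn ℝ univ f) (hf' : HasFDerivAt f f' x)
    (y : E) : f x + f' (y - x) ≤ f y := by
  have hline : ConvexOn ℝ univ (f ∘ AffineMap.lineMap (k := ℝ) x y) := by
    simpa using hf.comp_affineMap (AffineMap.lineMap (k := ℝ) x y)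
  have hd : HasDerivAt (f ∘ AffineMap.lineMap (k := ℝ) x y) (f' (y - x)) 0 := by
    rw [← AffineMap.lineMap_apply_zero x y (k := ℝ)] at hf'
    exact hf'.comp_hasDerivAt 0 AffineMap.hasDerivAt_lineMap
  have := hline.le_slope_of_hasDerivAt (mem_univ 0) (mem_univ 1) zero_lt_one hd
  simp only [slope_def_field, Function.comp_apply, AffineMap.lineMap_apply_one,
    AffineMap.lineMap_apply_zero, sub_zero, div_one] at this
  linarith

section Gradient

variable {E : Type*} [NormedAddCommGroup E] [InnerProductSpace ℝ E] [CompleteSpace E]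
  {f : E → ℝ} {x : E}

theorem StrongConvexOn.add_inner_gradient_add_le {m : ℝ} (hf : StrongConvexOn univ m f)
    (hx : DifferentiableAt ℝ f x) (y : E) :
    f x + ⟪gradient f x, y - x⟫ + m / 2 * ‖y - x‖ ^ 2 ≤ f y := by
  have hG := hx.hasFDerivAt.sub ((hasStrictFDerivAt_norm_sq x).hasFDerivAt.const_mul (m / 2))
  have := (strongConvexOn_iff_convex.1 hf).add_le_of_hasFDerivAt hG y
  simp only [sub_apply, map_sub, smul_apply, coe_innerSL_apply, nsmul_eq_mul, Nat.cast_ofNat,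
    smul_eq_mul, real_inner_self_eq_norm_sq] at this
  rw [inner_gradient_left, map_sub, norm_sub_sq_real, real_inner_comm]
  linarith

theorem StrongConvexOn.two_mul_sub_le_norm_gradient_sq {m : ℝ} (hf : StrongConvexOn univ m f)
    (hm : 0 ≤ m) (hx : DifferentiableAt ℝ f x) (y : E) :
    2 * m * (f x - f y) ≤ ‖gradient f x‖ ^ 2 := by
  have hfo := hf.add_inner_gradient_add_le hx y
  have hcs : -(‖gradient f x‖ * ‖y - x‖) ≤ ⟪gradient f x, y - x⟫ :=
    neg_le_of_abs_le (abs_real_inner_le_norm _ _)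
  nlinarith [sq_nonneg (‖gradient f x‖ - m * ‖y - x‖)]

theorem apply_add_le_of_lipschitz_gradient {L : ℝ} (hf : Differentiable ℝ f)
    (hsmooth : ∀ x y, ‖gradient f x - gradient f y‖ ≤ L * ‖x - y‖) (x v : E) :
    f (x + v) ≤ f x + ⟪gradient f x, v⟫ + L / 2 * ‖v‖ ^ 2 := by
  set ψ : ℝ → ℝ := fun t => f (x + t • v) - t * ⟪gradient f x, v⟫ - t ^ 2 * (L / 2 * ‖v‖ ^ 2)
  have hψ' : ∀ t, HasDerivAt ψ
      (⟪gradient f (x + t • v) - gradient f x, v⟫ - L * t * ‖v‖ ^ 2) t := by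
    intro t
    have hline : HasDerivAt (fun s : ℝ => x + s • v) v t := by
      simpa using ((hasDerivAt_id t).smul_const v).const_add x
    have h := (((hf _).hasFDerivAt.comp_hasDerivAt t hline).sub
      ((hasDerivAt_id t).mul_const ⟪gradient f x, v⟫)).sub
      ((hasDerivAt_pow 2 t).mul_const (L / 2 * ‖v‖ ^ 2))
    refine h.congr_deriv ?_
    rw [inner_sub_left, inner_gradient_left, inner_gradient_left]
    push_cast
    ring
  have hψ'_nonpos : ∀ t ∈ Ioo (0 : ℝ) 1,
      ⟪gradient f (x + t • v) - gradient f x, v⟫ - L * t * ‖v‖ ^ 2 ≤ 0 := by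
    intro t ht
    have := calc ⟪gradient f (x + t • v) - gradient f x, v⟫
        ≤ ‖gradient f (x + t • v) - gradient f x‖ * ‖v‖ := real_inner_le_norm _ _
      _ ≤ L * ‖x + t • v - x‖ * ‖v‖ := by gcongr; exact hsmooth _ _
      _ = L * t * ‖v‖ ^ 2 := by
        rw [add_sub_cancel_left, norm_smul, Real.norm_of_nonneg ht.1.le]; ring
    linarith
  have hanti : AntitoneOn ψ (Icc 0 1) :=
    antitoneOn_of_hasDerivWithinAt_nonpos (convex_Icc 0 1)
      (fun t _ => (hψ' t).continuousAt.continuousWithinAt)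
      (fun t _ => (hψ' t).hasDerivWithinAt) (by simpa using hψ'_nonpos)
  have := hanti (left_mem_Icc.2 zero_le_one) (right_mem_Icc.2 zero_le_one) zero_le_one
  simp only [one_smul, one_mul, one_pow, zero_smul, add_zero, zero_mul, sub_zero, ne_eq,
    OfNat.ofNat_ne_zero, not_false_eq_true, zero_pow, tsub_le_iff_right, ψ] at this
  linarith

theorem norm_gradient_sq_le_of_lipschitz_gradient {L : ℝ} (hL : 0 < L)
    (hf : Differentiable ℝ f) (hsmooth : ∀ x y, ‖gradient f x - gradient f y‖ ≤ L * ‖x - y‖)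
    {xstar : E} (hmin : IsMinOn f univ xstar) (x : E) :
    ‖gradient f x‖ ^ 2 ≤ 2 * L * (f x - f xstar) := by
  have hstep := apply_add_le_of_lipschitz_gradient hf hsmooth x (-L⁻¹ • gradient f x)
  rw [inner_smul_right, real_inner_self_eq_norm_sq, norm_smul, mul_pow, norm_neg,
    Real.norm_of_nonneg (inv_nonneg.2 hL.le)] at hstep
  have hmin' : f xstar ≤ f (x + -L⁻¹ • gradient f x) := hmin (mem_univ _)
  have key : L⁻¹ / 2 * ‖gradient f x‖ ^ 2 ≤ f x - f xstar := by
    have : L / 2 * (L⁻¹ ^ 2 * ‖gradient f x‖ ^ 2) = L⁻¹ / 2 * ‖gradient f x‖ ^ 2 := by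
      field_simp
    linarith
  calc ‖gradient f x‖ ^ 2 = 2 * L * (L⁻¹ / 2 * ‖gradient f x‖ ^ 2) := by field_simp
    _ ≤ 2 * L * (f x - f xstar) := by gcongr

theorem apply_sub_smul_le_of_lipschitz_gradient {L γ : ℝ} (hf : Differentiable ℝ f)
    (hsmooth : ∀ x y, ‖gradient f x - gradient f y‖ ≤ L * ‖x - y‖) (hγ0 : 0 ≤ γ) (hγL : γ * L ≤ 1)
    (x h : E) :
    f (x - γ • h) ≤ f x - γ / 2 * ‖gradient f x‖ ^ 2 + γ / 2 * ‖gradient f x - h‖ ^ 2 := by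
  have hstep := apply_add_le_of_lipschitz_gradient hf hsmooth x (-(γ • h))
  rw [← sub_eq_add_neg, inner_neg_right, real_inner_smul_right, norm_neg, norm_smul, mul_pow,
    Real.norm_of_nonneg hγ0] at hstep
  have hshort : 0 ≤ γ * (1 - γ * L) * ‖h‖ ^ 2 := by
    have : 0 ≤ 1 - γ * L := by linarith
    positivity
  rw [norm_sub_sq_real]
  linarith

end Gradient

theorem stmt_18_general (n : ℕ) (f : EuclideanSpace ℝ (Fin n) → ℝ) (L ℓ : ℝ)
    (hL : 0 < L) (hℓ : 0 < ℓ)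
    (hdiff : Differentiable ℝ f)
    (hsmooth : ∀ x y, ‖gradient f x - gradient f y‖ ≤ L * ‖x - y‖)
    (hstrong : StrongConvexOn Set.univ ℓ f)
    (xstar : EuclideanSpace ℝ (Fin n)) (hmin : IsMinOn f Set.univ xstar)
    (γ rbar δ : ℝ) (hγ0 : 0 < γ) (hγ : γ ≤ 1 / L)
    (x h : EuclideanSpace ℝ (Fin n))
    (herr : ‖gradient f x - h‖ ≤ max (rbar * ‖gradient f x‖) δ) :
    f (x - γ • h) - f xstar
      ≤ (1 + γ * L * rbar ^ 2 - γ * ℓ) * (f x - f xstar) + γ * δ ^ 2 / 2 := by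
  have hγL : γ * L ≤ 1 := (le_div_iff₀ hL).1 hγ
  have hstep := apply_sub_smul_le_of_lipschitz_gradient hdiff hsmooth hγ0.le hγL x h
  have herr_sq := sq_le_sq_add_sq_of_le_max (norm_nonneg _) herr
  have hPL := hstrong.two_mul_sub_le_norm_gradient_sq hℓ.le (hdiff x) xstar
  have hgrad := norm_gradient_sq_le_of_lipschitz_gradient hL hdiff hsmooth hmin x
  rw [mul_pow] at herr_sq
  linarith [mul_le_mul_of_nonneg_left hPL hγ0.le,
    mul_le_mul_of_nonneg_left hgrad (by positivity : 0 ≤ γ * rbar ^ 2),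
    mul_le_mul_of_nonneg_left herr_sq hγ0.le]

/-- unified contraction under mixed relative/absolute gradient error. -/
theorem stmt_18 (n : ℕ) (f : EuclideanSpace ℝ (Fin n) → ℝ) (L ℓ : ℝ)
    (hL : 0 < L) (hℓ : 0 < ℓ)
    (hdiff : Differentiable ℝ f)
    (hsmooth : ∀ x y, ‖gradient f x - gradient f y‖ ≤ L * ‖x - y‖)
    (hstrong : StrongConvexOn Set.univ ℓ f)
    (xstar : EuclideanSpace ℝ (Fin n)) (hmin : IsMinOn f Set.univ xstar)
    (γ rbar δ : ℝ) (hγ0 : 0 < γ) (hγ : γ ≤ 1 / L) (hrbar : 0 ≤ rbar) (hδ : 0 ≤ δ)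
    (x h : EuclideanSpace ℝ (Fin n))
    (herr : ‖gradient f x - h‖ ≤ max (rbar * ‖gradient f x‖) δ) :
    f (x - γ • h) - f xstar
      ≤ (1 + γ * L * rbar ^ 2 - γ * ℓ) * (f x - f xstar) + γ * δ ^ 2 / 2 :=
  stmt_18_general n f L ℓ hL hℓ hdiff hsmooth hstrong xstar hmin γ rbar δ hγ0 hγ x h herr
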